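/- arXiv:1601.01488 — 3 statements merged into one kernel-verified Lean document; each statement's English description precedes it below -/
import Mathlib

section
/- Let Q be a positive definite real L×L matrix and define r(a) = aᵀ Q a for a ∈ ℤ^L \ {0}. Suppose a_1, …, a_L ∈ ℤ^L are chosen greedily: a_k minimizes r(a) over nonzero integer vectors a linearly independent of {a_1,…,a_{k−1}} (over ℝ). Then the greedy choice achieves the optimal minimax value: max_{1≤k≤L} r(a_k) = min over all linearly independent families {d_1,…,d_L} ⊆ ℤ^L \ {0} of max_{1≤j≤L} r(d_j). -/
open Matrix

/-- The quadratic form `r(a) = aᵀ Q a` evaluated on an integer vector. -/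
def intQuadForm {L : ℕ} (Q : Matrix (Fin L) (Fin L) ℝ) (a : Fin L → ℤ) : ℝ :=
  (fun i => (a i : ℝ)) ⬝ᵥ Q.mulVec (fun i => (a i : ℝ))

/-
Any family of `L` linearly independent vectors escapes the span of the first `k < L` greedy
vectors, so some `d j` is a competitor at step `k` and `r(a_k) ≤ r(d_j) ≤ max_j r(d_j)`.
-/

theorem LinearIndependent.exists_notMem_span_finset {R M ι : Type*} [Ring R]
    [StrongRankCondition R] [AddCommGroup M] [Module R M] [Fintype ι] {v : ι → M}
    (hv : LinearIndependent R v) (w : Finset M) (hw : w.card < Fintype.card ι) :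
    ∃ i, v i ∉ Submodule.span R (w : Set M) := by
  by_contra! h
  have := linearIndependent_le_span_aux' v hv w (Set.range_subset_iff.2 h)
  simp only [Finset.coe_sort_coe, Fintype.card_coe] at this
  omega

theorem LinearIndependent.exists_notMem_span_image_Iio {R M : Type*} [Ring R]
    [StrongRankCondition R] [AddCommGroup M] [Module R M] {L : ℕ} {v : Fin L → M} (hv : LinearIndependent R v)
    (f : Fin L → M) (k : Fin L) :
    ∃ j, v j ∉ Submodule.span R (f '' Set.Iio k) := by
  classical
  have hcard : ((Finset.Iio k).image f).card < Fintype.card (Fin L) := by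
    calc ((Finset.Iio k).image f).card ≤ (Finset.Iio k).card := Finset.card_image_le
      _ = k := Fin.card_Iio k
      _ < Fintype.card (Fin L) := by simp
  simpa [Finset.coe_image] using hv.exists_notMem_span_finset _ hcard

theorem stmt_12_general (L : ℕ) [NeZero L] (Q : Matrix (Fin L) (Fin L) ℝ)
    (a : Fin L → Fin L → ℤ)
    (ha0 : ∀ k, a k ≠ 0)
    (haInd : LinearIndependent ℝ (fun k => (fun i => ((a k i : ℝ)))))
    (hGreedy : ∀ k : Fin L, ∀ b : Fin L → ℤ, b ≠ 0 →
      (fun i => (b i : ℝ)) ∉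
        Submodule.span ℝ ((fun j : Fin L => (fun i => ((a j i : ℝ)))) '' {j | j < k}) →
      intQuadForm Q (a k) ≤ intQuadForm Q b) :
    IsLeast
      {x : ℝ | ∃ d : Fin L → Fin L → ℤ,
        (∀ j, d j ≠ 0) ∧
        LinearIndependent ℝ (fun j => (fun i => ((d j i : ℝ)))) ∧
        x = Finset.univ.sup' Finset.univ_nonempty (fun j => intQuadForm Q (d j))}
      (Finset.univ.sup' Finset.univ_nonempty (fun k => intQuadForm Q (a k))) := by
  refine ⟨⟨a, ha0, haInd, rfl⟩, ?_⟩
  rintro _ ⟨d, hd0, hdInd, rfl⟩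
  refine Finset.sup'_le _ _ fun k _ => ?_
  obtain ⟨j, hj⟩ := hdInd.exists_notMem_span_image_Iio (fun j i => (a j i : ℝ)) k
  exact (hGreedy k (d j) (hd0 j) hj).trans (Finset.le_sup' (fun j => intQuadForm Q (d j)) (Finset.mem_univ j))

theorem stmt_12 (L : ℕ) [NeZero L] (Q : Matrix (Fin L) (Fin L) ℝ) (hQ : Q.PosDef)
    (a : Fin L → Fin L → ℤ)
    (ha0 : ∀ k, a k ≠ 0)
    (haInd : LinearIndependent ℝ (fun k => (fun i => ((a k i : ℝ)))))
    (hGreedy : ∀ k : Fin L, ∀ b : Fin L → ℤ, b ≠ 0 →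
      (fun i => (b i : ℝ)) ∉
        Submodule.span ℝ ((fun j : Fin L => (fun i => ((a j i : ℝ)))) '' {j | j < k}) →
      intQuadForm Q (a k) ≤ intQuadForm Q b) :
    IsLeast
      {x : ℝ | ∃ d : Fin L → Fin L → ℤ,
        (∀ j, d j ≠ 0) ∧
        LinearIndependent ℝ (fun j => (fun i => ((d j i : ℝ)))) ∧
        x = Finset.univ.sup' Finset.univ_nonempty (fun j => intQuadForm Q (d j))}
      (Finset.univ.sup' Finset.univ_nonempty (fun k => intQuadForm Q (a k))) :=
  stmt_12_general L Q a ha0 haInd hGreedy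
end

section
/- Let G be a real L×N matrix, A a real L×(k−1) matrix with linearly independent columns, F = I_L − A(AᵀA)⁻¹Aᵀ, and G̃ = F G. For a ∈ ℝ^L, the choices b* = (I_N + G̃ᵀ G̃)⁻¹ G̃ᵀ a and β* = (AᵀA)⁻¹ Aᵀ (I_L − G (I_N + G̃ᵀG̃)⁻¹ G̃ᵀ) a minimize f(b, β) = ‖b‖² + ‖G b + A β − a‖² over (b, β) ∈ ℝ^N × ℝ^{k−1}. -/
/-!
The objective `f(b, β) = ‖b‖² + ‖G b + A β - a‖²` is a convex quadratic, so a point where the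
gradient vanishes, i.e. where the residual `r = G b + A β - a` satisfies `b + Gᵀ r = 0` and
`Aᵀ r = 0`, is a global minimiser: expanding `f` around it, the cross term is the gradient
paired with the displacement. At `(b*, β*)` the vector `A β*` is the least-squares fit of
`a - G b*` by the columns of `A`, so the residual is `F (G b* - a)`. Hence `Aᵀ r = 0` because
`Aᵀ F = 0`, and since `F` is a symmetric idempotent, `b* + Gᵀ r = (1 + G̃ᵀ G̃) b* - G̃ᵀ a = 0`.
-/

open Matrix

variable {R : Type*} {l m n : Type*} [Fintype l] [Fintype m] [Fintype n]

namespace Matrix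

section LinearOrderedField

variable [Field R] [LinearOrder R] [IsStrictOrderedRing R]

theorem isUnit_transpose_mul_self_of_linearIndependent_col [DecidableEq n]
    {A : Matrix l n R} (hA : LinearIndependent R A.col) : IsUnit (Aᵀ * A) := by
  rw [← mulVec_injective_iff_isUnit, ← coe_mulVecLin, ← LinearMap.ker_eq_bot,
    ker_mulVecLin_transpose_mul_self, LinearMap.ker_eq_bot, coe_mulVecLin]
  exact mulVec_injective_iff.mpr hA

theorem isUnit_one_add_transpose_mul_self [DecidableEq m] (B : Matrix l m R) :
    IsUnit (1 + Bᵀ * B) := by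
  rw [← mulVec_injective_iff_isUnit, ← coe_mulVecLin, ← LinearMap.ker_eq_bot,
    LinearMap.ker_eq_bot']
  intro x hx
  have hsum : x ⬝ᵥ x + (B *ᵥ x) ⬝ᵥ (B *ᵥ x) = 0 := by
    have := congr_arg (x ⬝ᵥ ·) hx
    simpa only [mulVecLin_apply, add_mulVec, one_mulVec, ← mulVec_mulVec, dotProduct_add,
      dotProduct_mulVec, vecMul_transpose, dotProduct_zero] using this
  exact dotProduct_self_eq_zero.mp ((add_eq_zero_iff_of_nonneg
    (Fintype.sum_nonneg fun _ => mul_self_nonneg _)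
    (Fintype.sum_nonneg fun _ => mul_self_nonneg _)).mp hsum).1

end LinearOrderedField

section CommRing

variable [CommRing R] [DecidableEq l] [DecidableEq n]

/-- The residual maker of least squares, the paper's `F`: when `AᵀA` is invertible it is the
orthogonal projection onto the complement of the column space of `A`. -/
noncomputable def residualMaker (A : Matrix l n R) : Matrix l l R := 1 - A * (Aᵀ * A)⁻¹ * Aᵀ

variable {A : Matrix l n R}

theorem residualMaker_transpose (A : Matrix l n R) : A.residualMakerᵀ = A.residualMaker := by
  rw [residualMaker, transpose_sub, transpose_one, transpose_mul, transpose_mul,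
    transpose_transpose, transpose_nonsing_inv, transpose_mul, transpose_transpose,
    Matrix.mul_assoc]

theorem transpose_mul_residualMaker (hA : IsUnit (Aᵀ * A)) : Aᵀ * A.residualMaker = 0 := by
  rw [residualMaker, Matrix.mul_sub, Matrix.mul_one, ← Matrix.mul_assoc, ← Matrix.mul_assoc,
    mul_nonsing_inv _ ((isUnit_iff_isUnit_det _).mp hA), Matrix.one_mul, sub_self]

theorem residualMaker_mul_self (hA : IsUnit (Aᵀ * A)) :
    A.residualMaker * A.residualMaker = A.residualMaker := by
  conv_lhs => arg 1; rw [residualMaker]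
  rw [Matrix.sub_mul, Matrix.one_mul, Matrix.mul_assoc, transpose_mul_residualMaker hA,
    Matrix.mul_zero, sub_zero]

theorem residualMaker_mulVec (A : Matrix l n R) (v : l → R) :
    A.residualMaker *ᵥ v = v - A *ᵥ (((Aᵀ * A)⁻¹ * Aᵀ) *ᵥ v) := by
  rw [residualMaker, sub_mulVec, one_mulVec, mulVec_mulVec, Matrix.mul_assoc]

end CommRing

end Matrix

section CommRing

variable [CommRing R]

/-- The paper's objective `f`. -/
def ridgeObjective (G : Matrix l m R) (A : Matrix l n R) (a : l → R) (b : m → R)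
    (β : n → R) : R :=
  ∑ i, b i ^ 2 + ∑ i, ((G *ᵥ b) i + (A *ᵥ β) i - a i) ^ 2

theorem ridgeObjective_eq_dotProduct (G : Matrix l m R) (A : Matrix l n R) (a : l → R)
    (b : m → R) (β : n → R) :
    ridgeObjective G A a b β = b ⬝ᵥ b + (G *ᵥ b + A *ᵥ β - a) ⬝ᵥ (G *ᵥ b + A *ᵥ β - a) := by
  simp only [ridgeObjective, dotProduct, sq, Pi.add_apply, Pi.sub_apply]

theorem add_transpose_mulVec_mulVec_sub_eq_zero [DecidableEq m]
    {F : Matrix l l R} (hFt : Fᵀ = F) (hFF : F * F = F) {G : Matrix l m R} {a : l → R}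
    {b : m → R} (hb : (1 + (F * G)ᵀ * (F * G)) *ᵥ b = (F * G)ᵀ *ᵥ a) :
    b + Gᵀ *ᵥ (F *ᵥ (G *ᵥ b - a)) = 0 := by
  have hGF : Gᵀ * F = (F * G)ᵀ := by rw [transpose_mul, hFt]
  have hGFG : Gᵀ * F * G = (F * G)ᵀ * (F * G) := by
    rw [← hGF, Matrix.mul_assoc, Matrix.mul_assoc, ← Matrix.mul_assoc F, hFF]
  rw [mulVec_sub, mulVec_sub, mulVec_mulVec, mulVec_mulVec, mulVec_mulVec, hGFG, hGF, ← hb,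
    add_mulVec, one_mulVec]
  abel

end CommRing

section LinearOrderedField

variable [Field R] [LinearOrder R] [IsStrictOrderedRing R]

theorem ridgeObjective_le_of_normal_equations {G : Matrix l m R} {A : Matrix l n R}
    {a : l → R} {b₀ : m → R} {β₀ : n → R}
    (hb : b₀ + Gᵀ *ᵥ (G *ᵥ b₀ + A *ᵥ β₀ - a) = 0) (hβ : Aᵀ *ᵥ (G *ᵥ b₀ + A *ᵥ β₀ - a) = 0)
    (b : m → R) (β : n → R) : ridgeObjective G A a b₀ β₀ ≤ ridgeObjective G A a b β := by
  set r₀ := G *ᵥ b₀ + A *ᵥ β₀ - a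
  set d := b - b₀
  set w := G *ᵥ d + A *ᵥ (β - β₀)
  have hbd : b = b₀ + d := (add_sub_cancel b₀ b).symm
  have hr : G *ᵥ b + A *ᵥ β - a = r₀ + w := by
    simp only [r₀, w, d, mulVec_sub]
    abel
  have hcross : b₀ ⬝ᵥ d + r₀ ⬝ᵥ w = 0 := by
    calc b₀ ⬝ᵥ d + r₀ ⬝ᵥ w = (b₀ + Gᵀ *ᵥ r₀) ⬝ᵥ d + (Aᵀ *ᵥ r₀) ⬝ᵥ (β - β₀) := by
          simp only [w, add_dotProduct, dotProduct_add, mulVec_transpose, dotProduct_mulVec]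
          ring
      _ = 0 := by rw [hb, hβ, zero_dotProduct, zero_dotProduct, add_zero]
  have hexpand : ridgeObjective G A a b β
      = ridgeObjective G A a b₀ β₀ + 2 * (b₀ ⬝ᵥ d + r₀ ⬝ᵥ w) + (d ⬝ᵥ d + w ⬝ᵥ w) := by
    rw [ridgeObjective_eq_dotProduct, ridgeObjective_eq_dotProduct, hr, hbd]
    simp only [add_dotProduct, dotProduct_add, dotProduct_comm d b₀, dotProduct_comm w r₀]
    ring
  rw [hexpand, hcross, mul_zero, add_zero, le_add_iff_nonneg_right]
  exact add_nonneg (Fintype.sum_nonneg fun _ => mul_self_nonneg _)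
    (Fintype.sum_nonneg fun _ => mul_self_nonneg _)

end LinearOrderedField

theorem stmt_14 (L N n : ℕ) (G : Matrix (Fin L) (Fin N) ℝ)
    (A : Matrix (Fin L) (Fin n) ℝ)
    (hA : LinearIndependent ℝ (fun j : Fin n => Aᵀ j))
    (a : Fin L → ℝ) :
    let F : Matrix (Fin L) (Fin L) ℝ := 1 - A * (Aᵀ * A)⁻¹ * Aᵀ
    let Gt : Matrix (Fin L) (Fin N) ℝ := F * G
    let bstar : Fin N → ℝ := ((1 + Gtᵀ * Gt)⁻¹).mulVec (Gtᵀ.mulVec a)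
    let βstar : Fin n → ℝ :=
      ((Aᵀ * A)⁻¹ * Aᵀ * (1 - G * (1 + Gtᵀ * Gt)⁻¹ * Gtᵀ)).mulVec a
    ∀ (b : Fin N → ℝ) (β : Fin n → ℝ),
      (∑ i, bstar i ^ 2) + (∑ i, (G.mulVec bstar i + A.mulVec βstar i - a i) ^ 2) ≤
        (∑ i, b i ^ 2) + (∑ i, (G.mulVec b i + A.mulVec β i - a i) ^ 2) := by
  intro F Gt bstar βstar b β
  have hAA : IsUnit (Aᵀ * A) := isUnit_transpose_mul_self_of_linearIndependent_col hA
  have hS : (1 + Gtᵀ * Gt) *ᵥ bstar = Gtᵀ *ᵥ a := by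
    rw [mulVec_mulVec, mul_nonsing_inv _
      ((isUnit_iff_isUnit_det _).mp (isUnit_one_add_transpose_mul_self Gt)), one_mulVec]
  have hβ : βstar = ((Aᵀ * A)⁻¹ * Aᵀ) *ᵥ (a - G *ᵥ bstar) := by
    simp only [βstar, bstar, Matrix.mul_sub, Matrix.mul_one, sub_mulVec, mulVec_sub,
      mulVec_mulVec, Matrix.mul_assoc]
  have hres : G *ᵥ bstar + A *ᵥ βstar - a = A.residualMaker *ᵥ (G *ᵥ bstar - a) := by
    rw [residualMaker_mulVec, hβ, ← neg_sub a (G *ᵥ bstar), mulVec_neg, mulVec_neg]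
    abel
  refine ridgeObjective_le_of_normal_equations ?_ ?_ b β
  · rw [hres]
    exact add_transpose_mulVec_mulVec_sub_eq_zero A.residualMaker_transpose
      (residualMaker_mul_self hAA) hS
  · rw [hres, mulVec_mulVec, transpose_mul_residualMaker hAA, zero_mulVec]
end

section
/- Let G, A, F, G̃ be as in the successive computing scheme. Then the minimal value min_{b,β} (‖b‖² + ‖G b + A β − a‖²) equals aᵀ Q_k a, where Q_k = Fᵀ (I_L + G̃ G̃ᵀ)⁻¹ F. -/
/-!
Both minimisations are completions of squares. For fixed `b`, minimising over `β` is least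
squares: `A (AᵀA)⁻¹ Aᵀ` is the orthogonal projection onto the column space of `A`, so the residual
`G b + A β - a` splits orthogonally and its minimal squared length is `‖F (a - G b)‖² = ‖G̃ b - F a‖²`.
What remains is ridge regression in `b`: with `M = 1 + G̃ G̃ᵀ` and `u = M⁻¹ F a`, the minimiser is
`b₀ = G̃ᵀ u`, since `G̃ b₀ = F a - u`, and the minimum is `(F a) ⬝ u = aᵀ Q_k a`.
-/

open Matrix

namespace Matrix

section CommRing

variable {R m n : Type*} [CommRing R] [Fintype m] [Fintype n]

theorem add_dotProduct_add_self (x y : n → R) :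
    (x + y) ⬝ᵥ (x + y) = x ⬝ᵥ x + 2 * (x ⬝ᵥ y) + y ⬝ᵥ y := by
  rw [add_dotProduct, dotProduct_add, dotProduct_add, dotProduct_comm y x]
  ring

theorem sub_dotProduct_sub_self (x y : n → R) :
    (x - y) ⬝ᵥ (x - y) = x ⬝ᵥ x - 2 * (x ⬝ᵥ y) + y ⬝ᵥ y := by
  rw [sub_eq_add_neg, add_dotProduct_add_self, dotProduct_neg, neg_dotProduct_neg]
  ring

theorem sum_sq_eq_dotProduct_self (v : n → R) : ∑ i, v i ^ 2 = v ⬝ᵥ v := by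
  simp only [dotProduct, sq]

theorem mulVec_dotProduct (M : Matrix m n R) (v : n → R) (w : m → R) :
    (M *ᵥ v) ⬝ᵥ w = v ⬝ᵥ (Mᵀ *ᵥ w) := by
  rw [dotProduct_transpose_mulVec, dotProduct_comm]

variable [DecidableEq m]

theorem ridge_dotProduct_eq (B : Matrix m n R) (hB : IsUnit (1 + B * Bᵀ).det)
    (c : m → R) (b : n → R) :
    b ⬝ᵥ b + (B *ᵥ b - c) ⬝ᵥ (B *ᵥ b - c) =
      (b - Bᵀ *ᵥ (1 + B * Bᵀ)⁻¹ *ᵥ c) ⬝ᵥ (b - Bᵀ *ᵥ (1 + B * Bᵀ)⁻¹ *ᵥ c) +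
        (B *ᵥ (b - Bᵀ *ᵥ (1 + B * Bᵀ)⁻¹ *ᵥ c)) ⬝ᵥ (B *ᵥ (b - Bᵀ *ᵥ (1 + B * Bᵀ)⁻¹ *ᵥ c)) +
        c ⬝ᵥ (1 + B * Bᵀ)⁻¹ *ᵥ c := by
  set u := (1 + B * Bᵀ)⁻¹ *ᵥ c
  set d := b - Bᵀ *ᵥ u
  have hBb₀ : B *ᵥ Bᵀ *ᵥ u = c - u := by
    have : (1 + B * Bᵀ) *ᵥ u = c := by
      rw [mulVec_mulVec, mul_nonsing_inv _ hB, one_mulVec]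
    rw [mulVec_mulVec, ← this, add_mulVec, one_mulVec]
    abel
  have hb : b = d + Bᵀ *ᵥ u := by simp only [d, sub_add_cancel]
  have hres : B *ᵥ b - c = B *ᵥ d - u := by
    rw [hb, mulVec_add, hBb₀]
    abel
  have hcross : (B *ᵥ d) ⬝ᵥ u = d ⬝ᵥ (Bᵀ *ᵥ u) := mulVec_dotProduct B d u
  have hb₀ : (Bᵀ *ᵥ u) ⬝ᵥ (Bᵀ *ᵥ u) = c ⬝ᵥ u - u ⬝ᵥ u := by
    rw [mulVec_dotProduct, transpose_transpose, hBb₀, dotProduct_sub, dotProduct_comm u c]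
  rw [hres, sub_dotProduct_sub_self, hcross, hb, add_dotProduct_add_self, hb₀]
  ring

variable [DecidableEq n]

theorem transpose_mul_one_sub_proj (A : Matrix m n R) (hA : IsUnit (Aᵀ * A).det) :
    Aᵀ * (1 - A * (Aᵀ * A)⁻¹ * Aᵀ) = 0 := by
  rw [Matrix.mul_sub, Matrix.mul_one, ← Matrix.mul_assoc, ← Matrix.mul_assoc,
    mul_nonsing_inv _ hA, Matrix.one_mul, sub_self]

theorem mulVec_sub_dotProduct_self (A : Matrix m n R) (hA : IsUnit (Aᵀ * A).det)
    (v : m → R) (β : n → R) :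
    (A *ᵥ β - v) ⬝ᵥ (A *ᵥ β - v) =
      (A *ᵥ (β - (Aᵀ * A)⁻¹ *ᵥ Aᵀ *ᵥ v)) ⬝ᵥ (A *ᵥ (β - (Aᵀ * A)⁻¹ *ᵥ Aᵀ *ᵥ v)) +
        ((1 - A * (Aᵀ * A)⁻¹ * Aᵀ) *ᵥ v) ⬝ᵥ ((1 - A * (Aᵀ * A)⁻¹ * Aᵀ) *ᵥ v) := by
  set F := 1 - A * (Aᵀ * A)⁻¹ * Aᵀ
  set d := β - (Aᵀ * A)⁻¹ *ᵥ Aᵀ *ᵥ v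
  have hsplit : A *ᵥ β - v = A *ᵥ d - F *ᵥ v := by
    simp only [d, F, mulVec_sub, sub_mulVec, one_mulVec, mulVec_mulVec, Matrix.mul_assoc]
    abel
  have horth : (A *ᵥ d) ⬝ᵥ (F *ᵥ v) = 0 := by
    rw [mulVec_dotProduct, mulVec_mulVec, transpose_mul_one_sub_proj A hA, zero_mulVec,
      dotProduct_zero]
  rw [hsplit, sub_dotProduct_sub_self, horth]
  ring

end CommRing

variable {m n : Type*} [Fintype m] [Fintype n]

theorem isUnit_det_transpose_mul_self [DecidableEq n] (A : Matrix m n ℝ)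
    (hA : Function.Injective A.mulVec) : IsUnit (Aᵀ * A).det :=
  (PosDef.conjTranspose_mul_self A hA).det_pos.ne'.isUnit

theorem isUnit_det_one_add_mul_transpose [DecidableEq m] (B : Matrix m n ℝ) :
    IsUnit (1 + B * Bᵀ).det :=
  (PosDef.one.add_posSemidef (posSemidef_self_mul_conjTranspose B)).det_pos.ne'.isUnit

end Matrix

theorem sum_sq_add_sum_sq_residual_eq {l k p : Type*} [Fintype l] [Fintype k] [Fintype p]
    [DecidableEq l] [DecidableEq p] (G : Matrix l k ℝ) (A : Matrix l p ℝ)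
    (hA : IsUnit (Aᵀ * A).det) (a : l → ℝ) (b : k → ℝ) (β : p → ℝ) :
    let F := 1 - A * (Aᵀ * A)⁻¹ * Aᵀ
    let Gt := F * G
    let b₀ := Gtᵀ *ᵥ (1 + Gt * Gtᵀ)⁻¹ *ᵥ F *ᵥ a
    let β₀ := (Aᵀ * A)⁻¹ *ᵥ Aᵀ *ᵥ (a - G *ᵥ b)
    (∑ i, b i ^ 2) + ∑ i, ((G *ᵥ b) i + (A *ᵥ β) i - a i) ^ 2 =
      (b - b₀) ⬝ᵥ (b - b₀) + (Gt *ᵥ (b - b₀)) ⬝ᵥ (Gt *ᵥ (b - b₀)) +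
        (A *ᵥ (β - β₀)) ⬝ᵥ (A *ᵥ (β - β₀)) + a ⬝ᵥ (Fᵀ * (1 + Gt * Gtᵀ)⁻¹ * F) *ᵥ a := by
  intro F Gt b₀ β₀
  have hres : F *ᵥ (a - G *ᵥ b) = -(Gt *ᵥ b - F *ᵥ a) := by
    rw [mulVec_sub, ← mulVec_mulVec, neg_sub]
  have hobj : ∑ i, ((G *ᵥ b) i + (A *ᵥ β) i - a i) ^ 2 =
      (A *ᵥ β - (a - G *ᵥ b)) ⬝ᵥ (A *ᵥ β - (a - G *ᵥ b)) := by
    rw [← sum_sq_eq_dotProduct_self]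
    exact Finset.sum_congr rfl fun i _ => by simp only [Pi.sub_apply]; ring
  have hQ : a ⬝ᵥ (Fᵀ * (1 + Gt * Gtᵀ)⁻¹ * F) *ᵥ a = (F *ᵥ a) ⬝ᵥ (1 + Gt * Gtᵀ)⁻¹ *ᵥ F *ᵥ a := by
    rw [← mulVec_mulVec, ← mulVec_mulVec, dotProduct_transpose_mulVec, dotProduct_comm]
  rw [sum_sq_eq_dotProduct_self, hobj, mulVec_sub_dotProduct_self A hA, hres,
    neg_dotProduct_neg, hQ]
  linear_combination ridge_dotProduct_eq Gt (isUnit_det_one_add_mul_transpose Gt) (F *ᵥ a) b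

theorem stmt_15 (L N n : ℕ) (G : Matrix (Fin L) (Fin N) ℝ)
    (A : Matrix (Fin L) (Fin n) ℝ)
    (hA : LinearIndependent ℝ (fun j : Fin n => Aᵀ j))
    (a : Fin L → ℝ) :
    let F : Matrix (Fin L) (Fin L) ℝ := 1 - A * (Aᵀ * A)⁻¹ * Aᵀ
    let Gt : Matrix (Fin L) (Fin N) ℝ := F * G
    let Qk : Matrix (Fin L) (Fin L) ℝ := Fᵀ * (1 + Gt * Gtᵀ)⁻¹ * F
    IsLeast
      {y : ℝ | ∃ (b : Fin N → ℝ) (β : Fin n → ℝ),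
        y = (∑ i, b i ^ 2) + ∑ i, (G.mulVec b i + A.mulVec β i - a i) ^ 2}
      (a ⬝ᵥ Qk.mulVec a) := by
  have key := sum_sq_add_sum_sq_residual_eq G A
    (isUnit_det_transpose_mul_self A (mulVec_injective_iff.mpr hA)) a
  dsimp only at key ⊢
  set F := 1 - A * (Aᵀ * A)⁻¹ * Aᵀ
  set b₀ := (F * G)ᵀ *ᵥ (1 + F * G * (F * G)ᵀ)⁻¹ *ᵥ F *ᵥ a
  refine ⟨⟨b₀, (Aᵀ * A)⁻¹ *ᵥ Aᵀ *ᵥ (a - G *ᵥ b₀), ?_⟩, ?_⟩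
  · rw [key]
    simp only [sub_self, mulVec_zero, dotProduct_zero, zero_add]
  · rintro _ ⟨b, β, rfl⟩
    rw [key]
    refine le_add_of_nonneg_left (add_nonneg (add_nonneg ?_ ?_) ?_) <;>
      exact dotProduct_star_self_nonneg _
end
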